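/- arXiv:1902.05047 — 2 statements merged into one kernel-verified Lean document; each statement's English description precedes it below -/
import Mathlib

section
/- For all b, t > 0 and all z ∈ ℝ, the series ∑_{k∈ℤ} G_t(z + 2bk) converges and satisfies ∑_{k∈ℤ} G_t(z + 2bk) ≤ 2/√(2πt) + 2/b. -/
/-!
By the integral test, the values of a nonnegative integrable function `f` that is unimodal with
peak `m` at the integers `k ≥ ⌊m⌋ + 2` sum to at most `∫ f`, and likewise at `k < ⌊m⌋` after
reflection; the two remaining integers contribute at most `2 sup f`. For
`f x = G_t(z + 2bx)` we have `sup f = 1/√(2πt)` and `∫ f = 1/(2b)`.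
-/

/-- The Gaussian kernel `G_t(x) = e^{−x²/(2t)}/√(2πt)`. -/
noncomputable def GaussKernel (t x : ℝ) : ℝ :=
  Real.exp (-x ^ 2 / (2 * t)) / Real.sqrt (2 * Real.pi * t)

open MeasureTheory Set

lemma summable_and_tsum_le_integral_of_antitoneOn {f : ℝ → ℝ} {c : ℝ} (hf0 : ∀ x, 0 ≤ f x)
    (hf : Integrable f) (hanti : AntitoneOn f (Ici c)) :
    Summable (fun n : ℕ => f (c + (n + 1 : ℕ))) ∧ ∑' n : ℕ, f (c + (n + 1 : ℕ)) ≤ ∫ x, f x := by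
  have hpartial : ∀ N : ℕ, ∑ n ∈ Finset.range N, f (c + (n + 1 : ℕ)) ≤ ∫ x, f x := fun N =>
    calc ∑ n ∈ Finset.range N, f (c + (n + 1 : ℕ))
        ≤ ∫ x in c..c + N, f x := (hanti.mono Icc_subset_Ici_self).sum_le_integral
      _ ≤ ∫ x, f x := by
        rw [intervalIntegral.integral_of_le (by simp)]
        exact setIntegral_le_integral hf (.of_forall hf0)
  exact ⟨summable_of_sum_range_le (fun _ => hf0 _) hpartial,
    Real.tsum_le_of_sum_range_le (fun _ => hf0 _) hpartial⟩

lemma summable_and_tsum_int_le_of_unimodal {f : ℝ → ℝ} {m M : ℝ} (hf0 : ∀ x, 0 ≤ f x)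
    (hfM : ∀ x, f x ≤ M) (hf : Integrable f) (hmono : MonotoneOn f (Iic m))
    (hanti : AntitoneOn f (Ici m)) :
    Summable (fun k : ℤ => f k) ∧ ∑' k : ℤ, f k ≤ 2 * M + 2 * ∫ x, f x := by
  set n : ℤ := ⌊m⌋
  obtain ⟨hsum_right, hright⟩ := summable_and_tsum_le_integral_of_antitoneOn hf0 hf
    (hanti.mono (Ici_subset_Ici.2 (Int.lt_floor_add_one m).le))
  obtain ⟨hsum_left, hleft⟩ := summable_and_tsum_le_integral_of_antitoneOn (c := -n)
    (fun x => hf0 (-x)) hf.comp_neg fun u hu v hv huv =>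
      hmono (show -v ≤ m by linarith [mem_Ici.1 hv, Int.floor_le m])
        (show -u ≤ m by linarith [mem_Ici.1 hu, Int.floor_le m]) (neg_le_neg huv)
  rw [integral_neg_eq_self] at hleft
  set g : ℤ → ℝ := fun j => f ↑(n + j)
  have hg_right : (fun j : ℕ => g ↑(j + 2)) = fun j : ℕ => f (n + 1 + (j + 1 : ℕ)) := by
    ext j; simp only [g]; push_cast; ring_nf
  have hg_left : (fun j : ℕ => g (-(j + 1))) = fun j : ℕ => f (-(-n + (j + 1 : ℕ))) := by
    ext j; simp only [g]; push_cast; ring_nf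
  have hsum_nat : Summable (fun j : ℕ => g j) :=
    (summable_nat_add_iff 2).1 (by exact_mod_cast hg_right ▸ hsum_right)
  have hsum_neg : Summable (fun j : ℕ => g (-(j + 1))) := hg_left ▸ hsum_left
  have hg : ∑' j, g j ≤ 2 * M + 2 * ∫ x, f x := by
    rw [tsum_of_nat_of_neg_add_one hsum_nat hsum_neg, ← hsum_nat.sum_add_tsum_nat_add 2]
    have htail : ∑' j : ℕ, g ↑(j + 2) ≤ ∫ x, f x := by rw [hg_right]; exact hright
    rw [hg_left]
    simp only [Finset.sum_range_succ, Finset.sum_range_zero]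
    linarith [hfM ↑(n + ((0 : ℕ) : ℤ)), hfM ↑(n + ((1 : ℕ) : ℤ))]
  have hshift : g = (fun k : ℤ => f k) ∘ Equiv.addLeft n := rfl
  refine ⟨(Equiv.addLeft n).summable_iff.1
    (hshift ▸ Summable.of_nat_of_neg_add_one hsum_nat hsum_neg), ?_⟩
  rwa [← (Equiv.addLeft n).tsum_eq]

lemma summable_and_tsum_affine_le_of_unimodal {g : ℝ → ℝ} {m M z h : ℝ} (hh : 0 < h)
    (hg0 : ∀ x, 0 ≤ g x) (hgM : ∀ x, g x ≤ M) (hg : Integrable g)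
    (hmono : MonotoneOn g (Iic m)) (hanti : AntitoneOn g (Ici m)) :
    Summable (fun k : ℤ => g (z + h * k)) ∧
      ∑' k : ℤ, g (z + h * k) ≤ 2 * M + 2 * (∫ x, g x) / h := by
  have hintegral : ∫ x, g (z + h * x) = (∫ x, g x) / h := by
    rw [Measure.integral_comp_mul_left (fun y => g (z + y)), integral_add_left_eq_self,
      abs_of_pos (inv_pos.2 hh), smul_eq_mul, inv_mul_eq_div]
  have hleft : ∀ x, x ≤ (m - z) / h → z + h * x ≤ m := fun x hx => by
    rw [le_div_iff₀ hh] at hx; linarith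
  have hright : ∀ x, (m - z) / h ≤ x → m ≤ z + h * x := fun x hx => by
    rw [div_le_iff₀ hh] at hx; linarith
  have := summable_and_tsum_int_le_of_unimodal (f := fun x => g (z + h * x)) (m := (m - z) / h)
    (fun x => hg0 _) (fun x => hgM _) ((hg.comp_add_left z).comp_mul_left' hh.ne')
    (fun u hu v hv huv => hmono (hleft u hu) (hleft v hv) (by gcongr))
    (fun u hu v hv huv => hanti (hright u hu) (hright v hv) (by gcongr))
  rwa [hintegral, ← mul_div_assoc] at this

open ProbabilityTheory

lemma gaussKernel_eq_gaussianPDFReal {t : ℝ} (ht : 0 ≤ t) :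
    GaussKernel t = gaussianPDFReal 0 ⟨t, ht⟩ := by
  ext x
  simp only [GaussKernel, gaussianPDFReal, sub_zero]
  exact div_eq_inv_mul _ _

lemma integrable_gaussKernel {t : ℝ} (ht : 0 ≤ t) : Integrable (GaussKernel t) := by
  rw [gaussKernel_eq_gaussianPDFReal ht]; exact integrable_gaussianPDFReal 0 _

lemma integral_gaussKernel {t : ℝ} (ht : 0 < t) : ∫ x, GaussKernel t x = 1 := by
  rw [gaussKernel_eq_gaussianPDFReal ht.le]
  exact integral_gaussianPDFReal_eq_one 0 fun h => ht.ne' (congrArg NNReal.toReal h)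

lemma gaussKernel_nonneg (t x : ℝ) : 0 ≤ GaussKernel t x := by unfold GaussKernel; positivity

lemma gaussKernel_le_gaussKernel {t x y : ℝ} (ht : 0 ≤ t) (hxy : y ^ 2 ≤ x ^ 2) :
    GaussKernel t x ≤ GaussKernel t y := by
  unfold GaussKernel; gcongr

lemma gaussKernel_zero (t : ℝ) : GaussKernel t 0 = 1 / Real.sqrt (2 * Real.pi * t) := by
  simp [GaussKernel]

lemma gaussKernel_le_gaussKernel_zero {t : ℝ} (ht : 0 ≤ t) (x : ℝ) :
    GaussKernel t x ≤ GaussKernel t 0 :=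
  gaussKernel_le_gaussKernel ht (by simpa using sq_nonneg x)

lemma gaussKernel_monotoneOn {t : ℝ} (ht : 0 ≤ t) : MonotoneOn (GaussKernel t) (Iic 0) :=
  fun x hx y hy hxy => gaussKernel_le_gaussKernel ht (by nlinarith [mem_Iic.1 hx, mem_Iic.1 hy])

lemma gaussKernel_antitoneOn {t : ℝ} (ht : 0 ≤ t) : AntitoneOn (GaussKernel t) (Ici 0) :=
  fun _ hx _ _ hxy => gaussKernel_le_gaussKernel ht (pow_le_pow_left₀ hx hxy 2)

/-- Lattice Gaussian sum bound: for `b, t > 0` and `z ∈ ℝ`, the series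
`∑_{k∈ℤ} G_t(z + 2bk)` converges and is at most `2/√(2πt) + 2/b`. -/
theorem stmt5 (b t z : ℝ) (hb : 0 < b) (ht : 0 < t) :
    Summable (fun k : ℤ => GaussKernel t (z + 2 * b * (k : ℝ))) ∧
    ∑' k : ℤ, GaussKernel t (z + 2 * b * (k : ℝ))
      ≤ 2 / Real.sqrt (2 * Real.pi * t) + 2 / b := by
  obtain ⟨hsum, hle⟩ :=
    summable_and_tsum_affine_le_of_unimodal (z := z) (by positivity : 0 < 2 * b)
    (gaussKernel_nonneg t) (gaussKernel_le_gaussKernel_zero ht.le) (integrable_gaussKernel ht.le)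
    (gaussKernel_monotoneOn ht.le) (gaussKernel_antitoneOn ht.le)
  refine ⟨hsum, hle.trans ?_⟩
  calc 2 * GaussKernel t 0 + 2 * (∫ x, GaussKernel t x) / (2 * b)
      = 2 / Real.sqrt (2 * Real.pi * t) + 1 / b := by
        rw [integral_gaussKernel ht, gaussKernel_zero]; field_simp
    _ ≤ 2 / Real.sqrt (2 * Real.pi * t) + 2 / b := by gcongr; norm_num
end

section
/- Let (Ω, ℱ, P) be a probability space and let X : ℝ × Ω → ℝ be a jointly measurable stochastic process whose sample paths x ↦ X(x,ω) are continuous for every ω. Assume: (i) for every n ∈ ℤ, the random variable sup_{x∈[n,n+1]} |X(x)| has the same distribution as sup_{x∈[0,1]} |X(x)|; and (ii) there exist m ≥ 0 and v > 0 such that P[ sup_{x∈[0,1]} |X(x)| ≥ u ] ≤ e^{−(u−m)²/(2v²)} for all u ≥ m. Then, almost surely, there exists a finite constant C > 0 such that |X(x,ω)| ≤ C √(log(2+|x|)) for every x ∈ ℝ. -/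
open MeasureTheory Filter

lemma aux_summable9 : Summable (fun n : ℤ => ((2 + |(n : ℝ)|) ^ 2)⁻¹) := by
  have hnat : Summable (fun n : ℕ => ((2 + (n : ℝ)) ^ 2)⁻¹) := by
    have h0 : Summable (fun n : ℕ => ((n : ℝ) ^ 2)⁻¹) :=
      Real.summable_nat_pow_inv.mpr one_lt_two
    have := (summable_nat_add_iff 2).mpr h0
    refine this.congr fun n => ?_
    push_cast
    ring_nf
  apply Summable.of_nat_of_neg
  · refine hnat.congr fun n => ?_
    simp [Nat.abs_cast]
  · refine hnat.congr fun n => ?_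
    push_cast
    simp [Nat.abs_cast]


/-- Growth of suprema of stationary noises: if `X` is a jointly measurable process with
continuous paths whose suprema over unit intervals `[n, n+1]` all have the same distribution
as the supremum over `[0,1]`, and the latter has a Gaussian concentration tail
`P[sup ≥ u] ≤ e^{−(u−m)²/(2v²)}` for `u ≥ m`, then almost surely there is a finite `C > 0`
with `|X(x)| ≤ C √(log(2+|x|))` for all `x ∈ ℝ`. -/
theorem stmt9 {Ω : Type*} [MeasurableSpace Ω] (P : Measure Ω) [IsProbabilityMeasure P]
    (X : ℝ × Ω → ℝ) (hX : Measurable X)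
    (hcont : ∀ ω : Ω, Continuous fun x : ℝ => X (x, ω))
    (m v : ℝ) (hm : 0 ≤ m) (hv : 0 < v)
    (S : ℝ → Ω → ℝ)
    (hS : ∀ a : ℝ, ∀ ω : Ω, S a ω = sSup ((fun x => |X (x, ω)|) '' Set.Icc a (a + 1)))
    (hstat : ∀ n : ℤ, ∀ A : Set ℝ, MeasurableSet A →
      P {ω | S (n : ℝ) ω ∈ A} = P {ω | S 0 ω ∈ A})
    (htail : ∀ u : ℝ, m ≤ u →
      P {ω | u ≤ S 0 ω} ≤ ENNReal.ofReal (Real.exp (-(u - m) ^ 2 / (2 * v ^ 2)))) :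
    ∀ᵐ ω ∂P, ∃ C : ℝ, 0 < C ∧
      ∀ x : ℝ, |X (x, ω)| ≤ C * Real.sqrt (Real.log (2 + |x|)) := by
  set l2 : ℝ := Real.log 2 with hl2def
  have hl2 : 0 < l2 := Real.log_pos (by norm_num)
  have hsl2 : 0 < Real.sqrt l2 := Real.sqrt_pos.mpr hl2
  set c : ℝ := m / Real.sqrt l2 + 2 * v with hcdef
  have hcpos : 0 < c := by positivity
  set L : ℤ → ℝ := fun n => Real.log (2 + |(n : ℝ)|) with hLdef
  have hL2 : ∀ n : ℤ, (0:ℝ) < 2 + |(n : ℝ)| := fun n => by positivity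
  have hLl2 : ∀ n : ℤ, l2 ≤ L n := fun n =>
    Real.log_le_log (by norm_num) (by simpa using abs_nonneg ((n:ℝ)))
  have hLpos : ∀ n : ℤ, 0 < L n := fun n => lt_of_lt_of_le hl2 (hLl2 n)
  have hsLl2 : ∀ n : ℤ, Real.sqrt l2 ≤ Real.sqrt (L n) := fun n => Real.sqrt_le_sqrt (hLl2 n)
  -- the tail bound for each integer
  have hE : ∀ n : ℤ, P {ω | c * Real.sqrt (L n) ≤ S (n : ℝ) ω}
      ≤ ENNReal.ofReal (((2 + |(n : ℝ)|) ^ 2)⁻¹) := by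
    intro n
    set u : ℝ := c * Real.sqrt (L n) with hudef
    have hmu' : m ≤ m / Real.sqrt l2 * Real.sqrt (L n) := by
      have h := mul_le_mul_of_nonneg_left (hsLl2 n) (div_nonneg hm hsl2.le)
      have heq : m / Real.sqrt l2 * Real.sqrt l2 = m := by field_simp
      linarith
    have h2v : 2 * v * Real.sqrt (L n) ≤ u - m := by
      rw [hudef, hcdef]
      have : (m / Real.sqrt l2 + 2 * v) * Real.sqrt (L n)
          = m / Real.sqrt l2 * Real.sqrt (L n) + 2 * v * Real.sqrt (L n) := by ring
      rw [this]
      linarith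
    have hmu : m ≤ u := by nlinarith [Real.sqrt_nonneg (L n)]
    have hP : P {ω | u ≤ S (n : ℝ) ω} = P {ω | u ≤ S 0 ω} := by
      have := hstat n (Set.Ici u) measurableSet_Ici
      simpa [Set.mem_Ici] using this
    rw [hP]
    refine (htail u hmu).trans (ENNReal.ofReal_le_ofReal ?_)
    have hsq : Real.sqrt (L n) ^ 2 = L n := Real.sq_sqrt (hLpos n).le
    have hkey : 2 * L n ≤ (u - m) ^ 2 / (2 * v ^ 2) := by
      rw [le_div_iff₀ (by positivity)]
      have h0 : (0:ℝ) ≤ 2 * v * Real.sqrt (L n) := by positivity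
      have h4 : (2 * v * Real.sqrt (L n)) ^ 2 ≤ (u - m) ^ 2 := pow_le_pow_left₀ h0 h2v 2
      have h5 : (2 * v * Real.sqrt (L n)) ^ 2 = 2 * L n * (2 * v ^ 2) := by
        rw [mul_pow, mul_pow, hsq]; ring
      linarith
    have hexp : Real.exp (-(u - m) ^ 2 / (2 * v ^ 2)) ≤ Real.exp (-(2 * L n)) := by
      apply Real.exp_le_exp.mpr
      rw [neg_div]
      linarith
    refine hexp.trans_eq ?_
    have helog : Real.exp (L n) = 2 + |(n : ℝ)| := Real.exp_log (hL2 n)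
    rw [show (2 : ℝ) * L n = L n + L n by ring, Real.exp_neg, Real.exp_add, helog]
    ring_nf
  -- Borel–Cantelli
  set e : ℕ ≃ ℤ := (Denumerable.eqv ℤ).symm with hedef
  set E : ℕ → Set Ω := fun i => {ω | c * Real.sqrt (L (e i)) ≤ S ((e i : ℤ) : ℝ) ω} with hEdef
  have htsum : (∑' i, P (E i)) ≠ ⊤ := by
    have h1 : (∑' i, P (E i)) ≤ ∑' i : ℕ, ENNReal.ofReal (((2 + |((e i : ℤ) : ℝ)|) ^ 2)⁻¹) :=
      ENNReal.tsum_le_tsum fun i => hE (e i)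
    have h2 : (∑' i : ℕ, ENNReal.ofReal (((2 + |((e i : ℤ) : ℝ)|) ^ 2)⁻¹))
        = ∑' n : ℤ, ENNReal.ofReal (((2 + |(n : ℝ)|) ^ 2)⁻¹) :=
      e.tsum_eq fun n => ENNReal.ofReal (((2 + |(n : ℝ)|) ^ 2)⁻¹)
    have h3 : (∑' n : ℤ, ENNReal.ofReal (((2 + |(n : ℝ)|) ^ 2)⁻¹))
        = ENNReal.ofReal (∑' n : ℤ, ((2 + |(n : ℝ)|) ^ 2)⁻¹) :=
      (ENNReal.ofReal_tsum_of_nonneg (fun n => by positivity) aux_summable9).symm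
    refine ne_top_of_le_ne_top ?_ h1
    rw [h2, h3]
    exact ENNReal.ofReal_ne_top
  filter_upwards [ae_eventually_notMem htsum] with ω hω
  obtain ⟨N, hN⟩ := eventually_atTop.mp hω
  -- path-level facts
  have hbdd : ∀ a : ℝ, BddAbove ((fun x => |X (x, ω)|) '' Set.Icc a (a + 1)) := fun a =>
    isCompact_Icc.bddAbove_image (continuous_abs.comp (hcont ω)).continuousOn
  have hmem : ∀ a x : ℝ, x ∈ Set.Icc a (a + 1) → |X (x, ω)| ≤ S a ω := by
    intro a x hx
    rw [hS]
    exact le_csSup (hbdd a) ⟨x, hx, rfl⟩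
  have hSnn : ∀ a : ℝ, 0 ≤ S a ω := fun a =>
    le_trans (abs_nonneg _) (hmem a a ⟨le_refl a, by linarith⟩)
  set C0 : ℝ := c + ∑ i ∈ Finset.range N, S ((e i : ℤ) : ℝ) ω / Real.sqrt l2 with hC0def
  have hsum_nn : (0:ℝ) ≤ ∑ i ∈ Finset.range N, S ((e i : ℤ) : ℝ) ω / Real.sqrt l2 :=
    Finset.sum_nonneg fun i _ => div_nonneg (hSnn _) hsl2.le
  have hC0pos : 0 < C0 := by rw [hC0def]; linarith
  have hC0 : ∀ n : ℤ, S (n : ℝ) ω ≤ C0 * Real.sqrt (L n) := by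
    intro n
    rcases le_or_gt N (e.symm n) with hi | hi
    · have := hN (e.symm n) hi
      rw [hEdef] at this
      simp only [Set.mem_setOf_eq, Equiv.apply_symm_apply, not_le] at this
      have h1 : c ≤ C0 := by rw [hC0def]; linarith
      calc S (n : ℝ) ω ≤ c * Real.sqrt (L n) := this.le
        _ ≤ C0 * Real.sqrt (L n) := mul_le_mul_of_nonneg_right h1 (Real.sqrt_nonneg _)
    · have hterm : S (n : ℝ) ω / Real.sqrt l2
          ≤ ∑ i ∈ Finset.range N, S ((e i : ℤ) : ℝ) ω / Real.sqrt l2 := by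
        have hmem' : e.symm n ∈ Finset.range N := Finset.mem_range.mpr hi
        have := Finset.single_le_sum
          (f := fun i => S ((e i : ℤ) : ℝ) ω / Real.sqrt l2)
          (fun i _ => div_nonneg (hSnn _) hsl2.le) hmem'
        simpa using this
      have h1 : S (n : ℝ) ω / Real.sqrt l2 ≤ C0 := by rw [hC0def]; linarith
      have h2 : S (n : ℝ) ω = S (n : ℝ) ω / Real.sqrt l2 * Real.sqrt l2 := by field_simp
      rw [h2]
      calc S (n : ℝ) ω / Real.sqrt l2 * Real.sqrt l2
          ≤ C0 * Real.sqrt l2 := mul_le_mul_of_nonneg_right h1 hsl2.le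
        _ ≤ C0 * Real.sqrt (L n) := mul_le_mul_of_nonneg_left (hsLl2 n) hC0pos.le
  refine ⟨Real.sqrt 2 * C0, by positivity, fun x => ?_⟩
  set n : ℤ := ⌊x⌋ with hndef
  have hx : x ∈ Set.Icc ((n : ℤ) : ℝ) ((n : ℝ) + 1) :=
    ⟨Int.floor_le x, (Int.lt_floor_add_one x).le⟩
  have h1 : |X (x, ω)| ≤ S ((n : ℤ) : ℝ) ω := hmem _ x hx
  have habs : |((n : ℤ) : ℝ)| ≤ |x| + 1 := by
    rw [hndef, abs_le]
    constructor
    · nlinarith [Int.lt_floor_add_one x, neg_abs_le x]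
    · nlinarith [Int.floor_le x, le_abs_self x]
  have h3 : Real.sqrt (L n) ≤ Real.sqrt 2 * Real.sqrt (Real.log (2 + |x|)) := by
    rw [← Real.sqrt_mul (by norm_num)]
    apply Real.sqrt_le_sqrt
    have hb : (2:ℝ) + |((n : ℤ) : ℝ)| ≤ (2 + |x|) ^ 2 := by nlinarith [abs_nonneg x]
    calc L n ≤ Real.log ((2 + |x|) ^ 2) := Real.log_le_log (hL2 n) hb
      _ = 2 * Real.log (2 + |x|) := by
          rw [Real.log_pow]; push_cast; ring
  calc |X (x, ω)| ≤ S ((n : ℤ) : ℝ) ω := h1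
    _ ≤ C0 * Real.sqrt (L n) := hC0 n
    _ ≤ C0 * (Real.sqrt 2 * Real.sqrt (Real.log (2 + |x|))) :=
        mul_le_mul_of_nonneg_left h3 hC0pos.le
    _ = Real.sqrt 2 * C0 * Real.sqrt (Real.log (2 + |x|)) := by ring
end
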